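/- The partial order (divs, ≤*) is σ-closed: for every sequence (c̄ⁿ)_{n∈ℕ} of elements of divs with c̄ⁿ⁺¹ ≤* c̄ⁿ for all n, there exists c̄ ∈ divs such that c̄ ≤* c̄ⁿ for every n. -/

import Mathlib

/-!
Choose block boundaries `N 0 < N 1 < ⋯` so large that past `N m` the sequence `c m` lies below
`c 0, …, c m` (finitely many `≤*`-relations), and that `c m` sums to at least `1` over
`[N m, N (m + 1))`. The sequence `d` equal to `c m` on the `m`-th block lies below `c i` from `N i`
on, so it tends to `0`, and its partial sum up to `N M` is at least `M`.
-/

open Filter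

/-- `Divs c` says that `c` is a sequence of nonnegative reals converging to `0`
whose series diverges, i.e. `c ∈ divs`. -/
def Divs (c : ℕ → ℝ) : Prop :=
  (∀ n, 0 ≤ c n) ∧ Tendsto c atTop (nhds 0) ∧
    Tendsto (fun N => ∑ n ∈ Finset.range N, c n) atTop atTop

/-- `LeStar d c` is the eventual dominance relation `d ≤* c`. -/
def LeStar (d c : ℕ → ℝ) : Prop := ∀ᶠ n in atTop, d n ≤ c n

open Finset

/-- The index `m` of the block `[N m, N (m + 1))` containing `k` (and `0` when `k < N 0`). -/
def blockIdx (N : ℕ → ℕ) (k : ℕ) : ℕ := Nat.findGreatest (fun m => N m ≤ k) k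

section BlockIdx

variable {N : ℕ → ℕ}

theorem le_blockIdx (hN : StrictMono N) {m k : ℕ} (h : N m ≤ k) : m ≤ blockIdx N k :=
  Nat.le_findGreatest (hN.le_apply.trans h) h

theorem apply_blockIdx_le {k : ℕ} (h : N 0 ≤ k) : N (blockIdx N k) ≤ k :=
  Nat.findGreatest_spec (P := fun m => N m ≤ k) (Nat.zero_le k) h

theorem blockIdx_eq (hN : StrictMono N) {m k : ℕ} (h₁ : N m ≤ k) (h₂ : k < N (m + 1)) :
    blockIdx N k = m := by
  refine le_antisymm ?_ (le_blockIdx hN h₁)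
  by_contra! h
  have h₀ : N 0 ≤ k := (hN.monotone m.zero_le).trans h₁
  exact h₂.not_ge ((hN.monotone h).trans (apply_blockIdx_le h₀))

theorem apply_blockIdx_apply_le (hN : StrictMono N) {c : ℕ → ℕ → ℝ}
    (hc : ∀ m, ∀ k ≥ N m, ∀ i ≤ m, c m k ≤ c i k) {i k : ℕ} (hk : N i ≤ k) :
    c (blockIdx N k) k ≤ c i k :=
  hc _ k (apply_blockIdx_le ((hN.monotone i.zero_le).trans hk)) i (le_blockIdx hN hk)

theorem tendsto_sum_range_apply_blockIdx (hN : StrictMono N) {c : ℕ → ℕ → ℝ}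
    (hc₀ : ∀ m k, 0 ≤ c m k) (hblock : ∀ m, 1 ≤ ∑ k ∈ Ico (N m) (N (m + 1)), c m k) :
    Tendsto (fun K => ∑ k ∈ range K, c (blockIdx N k) k) atTop atTop := by
  have hsum : ∀ M : ℕ, (M : ℝ) ≤ ∑ k ∈ range (N M), c (blockIdx N k) k := by
    intro M
    induction M with
    | zero => simpa using sum_nonneg fun k _ => hc₀ _ k
    | succ M ih =>
      have hM : ∑ k ∈ Ico (N M) (N (M + 1)), c (blockIdx N k) k
          = ∑ k ∈ Ico (N M) (N (M + 1)), c M k :=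
        sum_congr rfl fun k hk => by rw [blockIdx_eq hN (mem_Ico.1 hk).1 (mem_Ico.1 hk).2]
      rw [← sum_range_add_sum_Ico _ (hN.monotone M.le_succ), hM]
      push_cast
      linarith [hblock M]
  refine tendsto_atTop_atTop_of_monotone
    (fun K L hKL => sum_le_sum_of_subset_of_nonneg (range_mono hKL) fun k _ _ => hc₀ _ k)
    fun b => ⟨N ⌈b⌉₊, (Nat.le_ceil b).trans (hsum _)⟩

end BlockIdx

theorem eventually_le_sum_Ico {f : ℕ → ℝ}
    (hf : Tendsto (fun K => ∑ k ∈ range K, f k) atTop atTop) (a : ℕ) (r : ℝ) :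
    ∀ᶠ b in atTop, r ≤ ∑ k ∈ Ico a b, f k := by
  filter_upwards [hf.eventually_ge_atTop (∑ k ∈ range a, f k + r), eventually_ge_atTop a]
    with b hb hab
  rw [← sum_range_add_sum_Ico f hab] at hb
  linarith

theorem exists_strictMono_one_le_sum_Ico {c : ℕ → ℕ → ℝ}
    (hc : ∀ m, Tendsto (fun K => ∑ k ∈ range K, c m k) atTop atTop) (B : ℕ → ℕ) :
    ∃ N : ℕ → ℕ, StrictMono N ∧ (∀ m, B m ≤ N m) ∧
      ∀ m, 1 ≤ ∑ k ∈ Ico (N m) (N (m + 1)), c m k := by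
  choose S hS using fun m a => ((eventually_le_sum_Ico (hc m) a 1).and
    ((eventually_gt_atTop a).and (eventually_ge_atTop (B (m + 1))))).exists
  let N : ℕ → ℕ := fun m => Nat.rec (B 0) S m
  refine ⟨N, strictMono_nat_of_lt_succ fun m => (hS m (N m)).2.1, ?_, fun m => (hS m (N m)).1⟩
  rintro (_ | m)
  · exact le_rfl
  · exact (hS m (N m)).2.2

theorem eventually_forall_le_of_leStar_succ {c : ℕ → ℕ → ℝ}
    (hdec : ∀ n, LeStar (c (n + 1)) (c n)) (m : ℕ) :
    ∀ᶠ k in atTop, ∀ i ≤ m, c m k ≤ c i k := by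
  induction m with
  | zero => exact Eventually.of_forall fun k i hi => by rw [Nat.le_zero.mp hi]
  | succ m ih =>
    filter_upwards [hdec m, ih] with k hsucc hm i hi
    rcases Nat.of_le_succ hi with hi | rfl
    · exact hsucc.trans (hm i hi)
    · exact le_rfl

theorem divs_sigma_closed (c : ℕ → ℕ → ℝ) (hdiv : ∀ n, Divs (c n))
    (hdec : ∀ n, LeStar (c (n + 1)) (c n)) :
    ∃ d : ℕ → ℝ, Divs d ∧ ∀ n, LeStar d (c n) := by
  choose B hB using fun m => eventually_atTop.mp (eventually_forall_le_of_leStar_succ hdec m)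
  obtain ⟨N, hN, hBN, hblock⟩ := exists_strictMono_one_le_sum_Ico (fun m => (hdiv m).2.2) B
  have hle : ∀ i, ∀ k ≥ N i, c (blockIdx N k) k ≤ c i k := fun i k =>
    apply_blockIdx_apply_le hN (fun m k hk => hB m k ((hBN m).trans hk))
  have hc₀ : ∀ m k, 0 ≤ c m k := fun m => (hdiv m).1
  refine ⟨fun k => c (blockIdx N k) k, ⟨fun k => hc₀ _ k, ?_, ?_⟩,
    fun i => eventually_atTop.mpr ⟨N i, hle i⟩⟩
  · exact tendsto_of_tendsto_of_tendsto_of_le_of_le' tendsto_const_nhds (hdiv 0).2.1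
      (Eventually.of_forall fun k => hc₀ _ k) (eventually_atTop.mpr ⟨N 0, hle 0⟩)
  · exact tendsto_sum_range_apply_blockIdx hN hc₀ hblock
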